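/- Let G be a connected simple graph with maximum degree Δ(G) ≥ 5. Then the subdivision graph S(G) is AVD-Type 1, i.e., χ''_a(S(G)) = Δ(S(G)) + 1 = Δ(G) + 1. -/

import Mathlib

open SimpleGraph

/-- The subdivision graph `S(G)`: each edge `{u,v}` of `G` is replaced by a new
vertex (the element of `G.edgeSet`) adjacent to both `u` and `v`. -/
def subdivisionGraph {V : Type*} (G : SimpleGraph V) : SimpleGraph (V ⊕ G.edgeSet) where
  Adj x y :=
    match x, y with
    | Sum.inl u, Sum.inr e => u ∈ (e : Sym2 V)
    | Sum.inr e, Sum.inl u => u ∈ (e : Sym2 V)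
    | _, _ => False
  symm := by refine ⟨?_⟩; rintro (u | e) (v | f) h <;> simp_all
  loopless := by refine ⟨?_⟩; rintro (u | e) h <;> simp_all

/-- The central graph `C(G)`: obtained from the subdivision graph `S(G)` by joining
every pair of distinct vertices of `G` that are non-adjacent in `G`. -/
def centralGraph {V : Type*} (G : SimpleGraph V) : SimpleGraph (V ⊕ G.edgeSet) where
  Adj x y :=
    match x, y with
    | Sum.inl u, Sum.inl v => u ≠ v ∧ ¬ G.Adj u v
    | Sum.inl u, Sum.inr e => u ∈ (e : Sym2 V)
    | Sum.inr e, Sum.inl u => u ∈ (e : Sym2 V)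
    | Sum.inr _, Sum.inr _ => False
  symm := by
    refine ⟨?_⟩
    rintro (u | e) (v | f) h
    · exact ⟨h.1.symm, fun a => h.2 a.symm⟩
    · exact h
    · exact h
    · exact h
  loopless := by
    refine ⟨?_⟩
    rintro (u | e) h
    · exact h.1 rfl
    · exact h

/-- The middle graph `M(G)`: obtained from the subdivision graph `S(G)` by joining
each pair of distinct subdivided vertices corresponding to adjacent edges of `G`. -/
def middleGraph {V : Type*} (G : SimpleGraph V) : SimpleGraph (V ⊕ G.edgeSet) where
  Adj x y :=
    match x, y with
    | Sum.inl u, Sum.inr e => u ∈ (e : Sym2 V)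
    | Sum.inr e, Sum.inl u => u ∈ (e : Sym2 V)
    | Sum.inr e, Sum.inr f => e ≠ f ∧ ∃ u, u ∈ (e : Sym2 V) ∧ u ∈ (f : Sym2 V)
    | Sum.inl _, Sum.inl _ => False
  symm := by
    refine ⟨?_⟩
    rintro (u | e) (v | f) h
    · exact h
    · exact h
    · exact h
    · exact ⟨h.1.symm, h.2.imp fun u hu => ⟨hu.2, hu.1⟩⟩
  loopless := by
    refine ⟨?_⟩
    rintro (u | e) h
    · exact h
    · exact h.1 rfl

/-- The line graph `L(G)`: vertices are the edges of `G`, two distinct edges being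
adjacent when they share an endpoint. -/
def lineG {V : Type*} (G : SimpleGraph V) : SimpleGraph G.edgeSet where
  Adj e f := e ≠ f ∧ ∃ u, u ∈ (e : Sym2 V) ∧ u ∈ (f : Sym2 V)
  symm := ⟨fun e f h => ⟨h.1.symm, h.2.imp fun u hu => ⟨hu.2, hu.1⟩⟩⟩
  loopless := ⟨fun e h => h.1 rfl⟩

/-- The endline graph `G⁺`: to each vertex `v` of `G` we attach a new pendant
vertex; `Sum.inl` is the copy of `V(G)` and `Sum.inr` are the new vertices. -/
def endlineGraph {V : Type*} (G : SimpleGraph V) : SimpleGraph (V ⊕ V) where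
  Adj x y :=
    match x, y with
    | Sum.inl u, Sum.inl v => G.Adj u v
    | Sum.inl u, Sum.inr v => u = v
    | Sum.inr u, Sum.inl v => u = v
    | Sum.inr _, Sum.inr _ => False
  symm := by
    refine ⟨?_⟩
    rintro (u | u) (v | v) h
    · exact h.symm
    · exact h.symm
    · exact h.symm
    · exact h
  loopless := by
    refine ⟨?_⟩
    rintro (u | u) h
    · exact G.irrefl h
    · exact h

/-- The join `G₁ + G₂` of two vertex-disjoint graphs: their disjoint union together
with all edges between the two vertex sets. -/
def joinGraph {V₁ V₂ : Type*} (G₁ : SimpleGraph V₁) (G₂ : SimpleGraph V₂) :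
    SimpleGraph (V₁ ⊕ V₂) where
  Adj x y :=
    match x, y with
    | Sum.inl u, Sum.inl v => G₁.Adj u v
    | Sum.inr u, Sum.inr v => G₂.Adj u v
    | Sum.inl _, Sum.inr _ => True
    | Sum.inr _, Sum.inl _ => True
  symm := by
    refine ⟨?_⟩
    rintro (u | u) (v | v) h
    · exact h.symm
    · trivial
    · trivial
    · exact h.symm
  loopless := by
    refine ⟨?_⟩
    rintro (u | u) h
    · exact G₁.irrefl h
    · exact G₂.irrefl h

/-- The maximum degree `Δ(H)` of a graph (as a supremum of cardinalities of
neighborhoods, which agrees with the usual maximum degree for finite graphs). -/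
noncomputable def maxDeg {W : Type*} (H : SimpleGraph W) : ℕ :=
  sSup {k | ∃ v : W, k = (H.neighborSet v).ncard}

/-- A graph is regular if all vertices have the same degree. -/
def IsRegularGraph {W : Type*} (H : SimpleGraph W) : Prop :=
  ∀ u v : W, (H.neighborSet u).ncard = (H.neighborSet v).ncard

/-- The distinguishing number `D(H)`: the least `d` such that `H` admits a vertex
coloring with `d` colors preserved only by the identity automorphism. -/
noncomputable def distinguishingNumber {W : Type*} (H : SimpleGraph W) : ℕ :=
  sInf {d | ∃ c : W → Fin d, ∀ φ : H ≃g H, (∀ v, c (φ v) = c v) → ∀ v, φ v = v}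

/-- The distinguishing index `D'(H)`: the least `d` such that `H` admits an edge
coloring with `d` colors preserved only by the identity automorphism. -/
noncomputable def distinguishingIndex {W : Type*} (H : SimpleGraph W) : ℕ :=
  sInf {d | ∃ c : H.edgeSet → Fin d,
    ∀ φ : H ≃g H, (∀ e, c (φ.mapEdgeSet e) = c e) → ∀ v, φ v = v}

/-- A proper total coloring of `H` with `d` colors: adjacent vertices, adjacent
edges, and incident vertex/edge pairs receive distinct colors. -/
def IsProperTotalColoring {W : Type*} (H : SimpleGraph W) {d : ℕ}
    (f : W ⊕ H.edgeSet → Fin d) : Prop :=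
  (∀ u v : W, H.Adj u v → f (Sum.inl u) ≠ f (Sum.inl v)) ∧
  (∀ e e' : H.edgeSet, e ≠ e' → (∃ u, u ∈ (e : Sym2 W) ∧ u ∈ (e' : Sym2 W)) →
    f (Sum.inr e) ≠ f (Sum.inr e')) ∧
  (∀ (v : W) (e : H.edgeSet), v ∈ (e : Sym2 W) → f (Sum.inl v) ≠ f (Sum.inr e))

/-- An automorphism `φ` preserves a total coloring `f`. -/
def PreservesTotalColoring {W : Type*} (H : SimpleGraph W) {d : ℕ}
    (f : W ⊕ H.edgeSet → Fin d) (φ : H ≃g H) : Prop :=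
  (∀ v : W, f (Sum.inl (φ v)) = f (Sum.inl v)) ∧
  (∀ e : H.edgeSet, f (Sum.inr (φ.mapEdgeSet e)) = f (Sum.inr e))

/-- The total chromatic number `χ''(H)`. -/
noncomputable def totalChromaticNumber {W : Type*} (H : SimpleGraph W) : ℕ :=
  sInf {d | ∃ f : W ⊕ H.edgeSet → Fin d, IsProperTotalColoring H f}

/-- The total distinguishing chromatic number `χ''_D(H)`: the least `d` such that
`H` has a proper total coloring with `d` colors preserved only by the identity. -/
noncomputable def totalDistinguishingChromaticNumber {W : Type*} (H : SimpleGraph W) : ℕ :=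
  sInf {d | ∃ f : W ⊕ H.edgeSet → Fin d, IsProperTotalColoring H f ∧
    ∀ φ : H ≃g H, PreservesTotalColoring H f φ → ∀ v, φ v = v}

/-- The color class `C_H(u)` of a vertex under a total coloring: the color of `u`
together with the colors of the edges incident to `u`. -/
def totalColorClass {W : Type*} (H : SimpleGraph W) {d : ℕ}
    (f : W ⊕ H.edgeSet → Fin d) (u : W) : Set (Fin d) :=
  {f (Sum.inl u)} ∪ {x | ∃ e : H.edgeSet, u ∈ (e : Sym2 W) ∧ x = f (Sum.inr e)}

/-- An AVD-total coloring: a proper total coloring in which adjacent vertices have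
distinct color classes. -/
def IsAVDTotalColoring {W : Type*} (H : SimpleGraph W) {d : ℕ}
    (f : W ⊕ H.edgeSet → Fin d) : Prop :=
  IsProperTotalColoring H f ∧
  ∀ u v : W, H.Adj u v → totalColorClass H f u ≠ totalColorClass H f v

/-- The AVD-total chromatic number `χ''ₐ(H)`. -/
noncomputable def avdTotalChromaticNumber {W : Type*} (H : SimpleGraph W) : ℕ :=
  sInf {d | ∃ f : W ⊕ H.edgeSet → Fin d, IsAVDTotalColoring H f}

/-- A total dominator coloring: a proper vertex coloring such that every vertex is
adjacent to every vertex of some (nonempty) color class. -/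
def IsTotalDominatorColoring {W : Type*} (H : SimpleGraph W) {d : ℕ}
    (c : W → Fin d) : Prop :=
  (∀ u v : W, H.Adj u v → c u ≠ c v) ∧
  (∀ v : W, ∃ i : Fin d, (∃ w, c w = i) ∧ ∀ w, c w = i → H.Adj v w)

/-- The total dominator chromatic number `χᵗ_d(H)`. -/
noncomputable def tdChromaticNumber {W : Type*} (H : SimpleGraph W) : ℕ :=
  sInf {d | ∃ c : W → Fin d, IsTotalDominatorColoring H c}

/-! `S(G)` is bipartite, with the vertices of `G` of their old degrees on one side and the
subdivision vertices of degree `2` on the other, so `Δ(S(G)) = Δ(G) =: Δ`, and a vertex of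
maximum degree together with its edges already needs `Δ + 1` colours. Conversely, give all
vertices of `G` colour `0`, colour the edges of `S(G)` with `1, …, Δ` by König's edge colouring
theorem (proved by Kempe-chain recolouring), and give each subdivision vertex a nonzero colour
avoiding its two edges, which is possible as `Δ ≥ 3`. Then `0` lies in the colour class of every
vertex of `G` and of no subdivision vertex, so adjacent vertices have distinct colour classes. -/

open Relation

section BipartiteEdgeColoring

variable {X Y C : Type*}

def IsProperEdgeColoring (R : Set (X × Y)) (c : X × Y → C) : Prop :=
  ∀ p ∈ R, ∀ q ∈ R, p ≠ q → p.1 = q.1 ∨ p.2 = q.2 → c p ≠ c q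

def alternatingStep (R : Set (X × Y)) (c : X × Y → C) (α β : C) (y y' : Y) : Prop :=
  ∃ x, (x, y) ∈ R ∧ c (x, y) = α ∧ (x, y') ∈ R ∧ c (x, y') = β

/-- Swapping `α` and `β` on this set keeps the colouring proper and frees `α` in column `y₀`
(when `β` is missing there). -/
def kempeChain (R : Set (X × Y)) (c : X × Y → C) (α β : C) (y₀ : Y) : Set (X × Y) :=
  {p | p ∈ R ∧ (c p = α ∨ c p = β) ∧ ReflTransGen (alternatingStep R c α β) y₀ p.2}

namespace IsProperEdgeColoring

variable {R : Set (X × Y)} {c : X × Y → C}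

theorem piecewise_swap [DecidableEq C] (hc : IsProperEdgeColoring R c) {α β : C}
    {K : Set (X × Y)} [DecidablePred (· ∈ K)] (hK : ∀ p ∈ K, c p = α ∨ c p = β)
    (hK_closed : ∀ p ∈ K, ∀ q ∈ R, p.1 = q.1 ∨ p.2 = q.2 → c q = α ∨ c q = β → q ∈ K) :
    IsProperEdgeColoring R (K.piecewise (Equiv.swap α β ∘ c) c) := by
  have mixed : ∀ p ∈ K, ∀ q ∈ R, q ∉ K → p.1 = q.1 ∨ p.2 = q.2 →
      Equiv.swap α β (c p) ≠ c q := by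
    intro p hpK q hq hqK hshare h
    have hq' : c q = α ∨ c q = β := by
      rcases hK p hpK with hp | hp <;> simp [hp] at h <;> simp [← h]
    exact hqK (hK_closed p hpK q hq hshare hq')
  intro p hp q hq hpq hshare
  by_cases hpK : p ∈ K <;> by_cases hqK : q ∈ K <;>
    simp only [Set.piecewise_eq_of_mem, Set.piecewise_eq_of_notMem, hpK, hqK,
      Function.comp_apply, not_false_eq_true]
  · exact (Equiv.injective _).ne (hc p hp q hq hpq hshare)
  · exact mixed p hpK q hq hqK hshare
  · exact (mixed q hqK p hp hpK (hshare.imp Eq.symm Eq.symm)).symm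
  · exact hc p hp q hq hpq hshare

/-- Since `β` is missing from column `y₀`, a `β`-cell of the chain was reached through the
`α`-cell of its row. -/
theorem exists_alpha_of_reflTransGen (hc : IsProperEdgeColoring R c) {α β : C} {x : X}
    {y₀ y : Y} (hβ : ∀ x, (x, y₀) ∈ R → c (x, y₀) ≠ β)
    (hy : ReflTransGen (alternatingStep R c α β) y₀ y) (hxy : (x, y) ∈ R) (hcxy : c (x, y) = β) :
    ∃ y', ReflTransGen (alternatingStep R c α β) y₀ y' ∧ (x, y') ∈ R ∧ c (x, y') = α := by
  rcases hy.cases_tail with rfl | ⟨y', hy', x', hx'y', hα', hx'y, hβ'⟩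
  · exact absurd hcxy (hβ x hxy)
  · obtain rfl : x = x' := by
      by_contra hne
      exact hc _ hxy _ hx'y (by simpa using hne) (Or.inr rfl) (hcxy.trans hβ'.symm)
    exact ⟨y', hy', hx'y', hα'⟩

theorem mem_kempeChain (hc : IsProperEdgeColoring R c) {α β : C} {y₀ : Y}
    (hβ : ∀ x, (x, y₀) ∈ R → c (x, y₀) ≠ β) {p q : X × Y} (hp : p ∈ kempeChain R c α β y₀)
    (hq : q ∈ R) (hshare : p.1 = q.1 ∨ p.2 = q.2) (hqαβ : c q = α ∨ c q = β) :
    q ∈ kempeChain R c α β y₀ := by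
  obtain ⟨x, y⟩ := p
  obtain ⟨x', y'⟩ := q
  obtain ⟨hp, hpαβ, hy⟩ := hp
  refine ⟨hq, hqαβ, ?_⟩
  rcases hshare with rfl | rfl
  · by_cases hyy : y = y'
    · exact hyy ▸ hy
    have hne := hc _ hp _ hq (by simpa using hyy) (Or.inl rfl)
    rcases hpαβ with hpα | hpβ
    · exact hy.tail ⟨x, hp, hpα, hq, hqαβ.resolve_left (hpα ▸ hne.symm)⟩
    · obtain ⟨y'', hy'', hxy'', hα''⟩ := hc.exists_alpha_of_reflTransGen hβ hy hp hpβ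
      by_contra hy'
      exact hc _ hxy'' _ hq (by rintro ⟨⟩; exact hy' hy'') (Or.inl rfl)
        (hα''.trans (hqαβ.resolve_right (hpβ ▸ hne.symm)).symm)
  · exact hy

theorem notMem_kempeChain (hc : IsProperEdgeColoring R c) {α β : C} {x₀ : X} {y₀ : Y}
    (hα : ∀ y, (x₀, y) ∈ R → c (x₀, y) ≠ α) (hβ : ∀ x, (x, y₀) ∈ R → c (x, y₀) ≠ β) (y : Y) :
    (x₀, y) ∉ kempeChain R c α β y₀ := by
  rintro ⟨hp, hpα | hpβ, hy⟩
  · exact hα y hp hpα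
  · obtain ⟨y', -, hy', hα'⟩ := hc.exists_alpha_of_reflTransGen hβ hy hp hpβ
    exact hα y' hy' hα'

theorem exists_recolor [DecidableEq C] (hc : IsProperEdgeColoring R c) {x₀ : X} {y₀ : Y}
    {α β : C} (hα : ∀ y, (x₀, y) ∈ R → c (x₀, y) ≠ α) (hβ : ∀ x, (x, y₀) ∈ R → c (x, y₀) ≠ β) :
    ∃ c', IsProperEdgeColoring R c' ∧ (∀ y, (x₀, y) ∈ R → c' (x₀, y) ≠ α) ∧
      ∀ x, (x, y₀) ∈ R → c' (x, y₀) ≠ α := by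
  classical
  by_cases hαβ : α = β
  · subst hαβ
    exact ⟨c, hc, hα, hβ⟩
  set K := kempeChain R c α β y₀
  refine ⟨K.piecewise (Equiv.swap α β ∘ c) c,
    hc.piecewise_swap (fun p hp => hp.2.1) (fun p hp q hq => hc.mem_kempeChain hβ hp hq),
    fun y hy => ?_, fun x hx => ?_⟩
  · rw [Set.piecewise_eq_of_notMem _ _ _ (hc.notMem_kempeChain hα hβ y)]
    exact hα y hy
  · by_cases hxK : (x, y₀) ∈ K
    · rw [Set.piecewise_eq_of_mem _ _ _ hxK, Function.comp_apply,
        (hxK.2.1.resolve_right (hβ x hx)), Equiv.swap_apply_left]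
      exact Ne.symm hαβ
    · rw [Set.piecewise_eq_of_notMem _ _ _ hxK]
      exact fun h => hxK ⟨hx, Or.inl h, ReflTransGen.refl⟩

theorem insert_update [DecidableEq X] [DecidableEq Y] (hc : IsProperEdgeColoring R c)
    {x₀ : X} {y₀ : Y} {α : C} (hrow : ∀ y, (x₀, y) ∈ R → c (x₀, y) ≠ α)
    (hcol : ∀ x, (x, y₀) ∈ R → c (x, y₀) ≠ α) :
    IsProperEdgeColoring (insert (x₀, y₀) R) (Function.update c (x₀, y₀) α) := by
  have key : ∀ q ∈ R, (x₀, y₀).1 = q.1 ∨ (x₀, y₀).2 = q.2 → c q ≠ α := by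
    rintro ⟨x, y⟩ hq (rfl | rfl)
    exacts [hrow y hq, hcol x hq]
  intro p hp q hq hpq hshare
  simp only [Function.update_apply]
  split_ifs with hp' hq' hq'
  · exact absurd (hp'.trans hq'.symm) hpq
  · subst hp'
    exact (key q (hq.resolve_left hq') hshare).symm
  · subst hq'
    exact key p (hp.resolve_left hp') (hshare.imp Eq.symm Eq.symm)
  · exact hc p (hp.resolve_left hp') q (hq.resolve_left hq') hpq hshare

end IsProperEdgeColoring

theorem exists_forall_ne_of_ncard_lt {ι : Type*} [Finite C] {s : Set ι} (hs : s.Finite)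
    (g : ι → C) (h : s.ncard < Nat.card C) : ∃ α, ∀ i ∈ s, g i ≠ α := by
  have himage : g '' s ≠ Set.univ := fun heq => by
    have := Set.ncard_image_le (f := g) hs
    rw [heq, Set.ncard_univ] at this
    omega
  obtain ⟨α, hα⟩ := (Set.ne_univ_iff_exists_notMem _).mp himage
  exact ⟨α, fun i hi hgi => hα ⟨i, hi, hgi⟩⟩

/-- König's edge colouring theorem for the bipartite graph with edge set `R`. -/
theorem exists_isProperEdgeColoring [Finite C] [Nonempty C] (R : Set (X × Y)) (hR : R.Finite)
    (hrow : ∀ x, {y | (x, y) ∈ R}.ncard ≤ Nat.card C)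
    (hcol : ∀ y, {x | (x, y) ∈ R}.ncard ≤ Nat.card C) :
    ∃ c : X × Y → C, IsProperEdgeColoring R c := by
  classical
  induction R, hR using Set.Finite.induction_on with
  | empty => exact ⟨fun _ => Classical.arbitrary C, fun p hp => hp.elim⟩
  | @insert p R hp hR ih =>
    obtain ⟨x₀, y₀⟩ := p
    have row_finite (x : X) : {y | (x, y) ∈ insert (x₀, y₀) R}.Finite :=
      (hR.insert _).preimage (Prod.mk_right_injective x).injOn
    have col_finite (y : Y) : {x | (x, y) ∈ insert (x₀, y₀) R}.Finite :=
      (hR.insert _).preimage (Prod.mk_left_injective y).injOn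
    obtain ⟨c, hc⟩ := ih
      (fun x => (Set.ncard_le_ncard (fun _ => Or.inr) (row_finite x)).trans (hrow x))
      (fun y => (Set.ncard_le_ncard (fun _ => Or.inr) (col_finite y)).trans (hcol y))
    have row_lt : {y | (x₀, y) ∈ R}.ncard < Nat.card C := by
      refine (Set.ncard_lt_ncard ?_ (row_finite x₀)).trans_le (hrow x₀)
      exact (Set.ssubset_iff_of_subset fun _ => Or.inr).mpr ⟨y₀, Or.inl rfl, hp⟩
    have col_lt : {x | (x, y₀) ∈ R}.ncard < Nat.card C := by
      refine (Set.ncard_lt_ncard ?_ (col_finite y₀)).trans_le (hcol y₀)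
      exact (Set.ssubset_iff_of_subset fun _ => Or.inr).mpr ⟨x₀, Or.inl rfl, hp⟩
    obtain ⟨α, hα⟩ := exists_forall_ne_of_ncard_lt ((row_finite x₀).subset fun _ => Or.inr)
      (fun y => c (x₀, y)) row_lt
    obtain ⟨β, hβ⟩ := exists_forall_ne_of_ncard_lt ((col_finite y₀).subset fun _ => Or.inr)
      (fun x => c (x, y₀)) col_lt
    obtain ⟨c', hc', hα', hβ'⟩ := hc.exists_recolor hα hβ
    exact ⟨Function.update c' (x₀, y₀) α, hc'.insert_update hα' hβ'⟩

end BipartiteEdgeColoring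

section MaxDeg

variable {W : Type*} (H : SimpleGraph W)

theorem bddAbove_ncard_neighborSet [Finite W] :
    BddAbove {k | ∃ v : W, k = (H.neighborSet v).ncard} :=
  ⟨Nat.card W, by rintro _ ⟨v, rfl⟩; exact Set.ncard_le_card _⟩

theorem ncard_neighborSet_le_maxDeg [Finite W] (v : W) : (H.neighborSet v).ncard ≤ maxDeg H :=
  le_csSup (bddAbove_ncard_neighborSet H) ⟨v, rfl⟩

theorem exists_ncard_neighborSet_eq_maxDeg [Finite W] [Nonempty W] :
    ∃ v, (H.neighborSet v).ncard = maxDeg H := by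
  have hne : {k | ∃ v : W, k = (H.neighborSet v).ncard}.Nonempty :=
    ⟨_, Classical.arbitrary W, rfl⟩
  obtain ⟨v, hv⟩ := Nat.sSup_mem hne (bddAbove_ncard_neighborSet H)
  exact ⟨v, hv.symm⟩

theorem nonempty_of_maxDeg_ne_zero (h : maxDeg H ≠ 0) : Nonempty W := by
  by_contra hW
  rw [not_nonempty_iff] at hW
  exact h (by simp [maxDeg])

variable {H}

theorem IsProperTotalColoring.ncard_neighborSet_lt {d : ℕ} {f : W ⊕ H.edgeSet → Fin d}
    (hf : IsProperTotalColoring H f) (v : W) : (H.neighborSet v).ncard < d := by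
  -- `v` and its incident edges receive pairwise distinct colours.
  let g : Option (H.neighborSet v) → Fin d := fun o =>
    o.elim (f (.inl v)) fun w => f (.inr ⟨s(v, w), w.2⟩)
  have hg : g.Injective := by
    rintro (_ | ⟨w, hw⟩) (_ | ⟨w', hw'⟩) h
    · rfl
    · exact absurd h (hf.2.2 v _ (Sym2.mem_mk_left _ _))
    · exact absurd h.symm (hf.2.2 v _ (Sym2.mem_mk_left _ _))
    · obtain rfl : w = w' := by
        by_contra hne
        refine hf.2.1 _ _ ?_ ⟨v, Sym2.mem_mk_left _ _, Sym2.mem_mk_left _ _⟩ h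
        exact fun heq => hne (Sym2.congr_right.mp (congrArg Subtype.val heq))
      rfl
  have : Finite (Option (H.neighborSet v)) := Finite.of_injective g hg
  have : Finite (H.neighborSet v) := Finite.of_injective some (Option.some_injective _)
  calc (H.neighborSet v).ncard < Nat.card (Option (H.neighborSet v)) := by
        rw [Finite.card_option, Nat.card_coe_set_eq]; omega
    _ ≤ Nat.card (Fin d) := Nat.card_le_card_of_injective g hg
    _ = d := Nat.card_fin d

theorem avdTotalChromaticNumber_eq_maxDeg_add_one [Finite W] [Nonempty W] {d : ℕ}
    {f : W ⊕ H.edgeSet → Fin d} (hf : IsAVDTotalColoring H f) (hd : d ≤ maxDeg H + 1) :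
    avdTotalChromaticNumber H = maxDeg H + 1 := by
  have hmem : d ∈ {d | ∃ f : W ⊕ H.edgeSet → Fin d, IsAVDTotalColoring H f} := ⟨f, hf⟩
  refine le_antisymm ((Nat.sInf_le hmem).trans hd) (le_csInf ⟨d, hmem⟩ ?_)
  rintro d' ⟨g, hg⟩
  obtain ⟨v, hv⟩ := exists_ncard_neighborSet_eq_maxDeg H
  exact hv ▸ hg.1.ncard_neighborSet_lt v

end MaxDeg

section Subdivision

variable {V : Type*} {G : SimpleGraph V}

theorem ncard_setOf_mem_edge (v : V) :
    {e : G.edgeSet | v ∈ (e : Sym2 V)}.ncard = (G.neighborSet v).ncard := by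
  classical
  rw [← Nat.card_coe_set_eq, ← Nat.card_coe_set_eq]
  exact Nat.card_congr ((Equiv.subtypeSubtypeEquivSubtypeInter (· ∈ G.edgeSet) (v ∈ ·)).trans
    (G.incidenceSetEquivNeighborSet v))

theorem ncard_setOf_mem_edge_eq_two (e : G.edgeSet) : {v | v ∈ (e : Sym2 V)}.ncard = 2 := by
  obtain ⟨e, he⟩ := e
  induction e using Sym2.ind with
  | _ a b =>
    have hab : {v | v ∈ s(a, b)} = {a, b} := by ext; simp
    rw [hab, Set.ncard_pair (G.ne_of_adj he)]

theorem subdivisionGraph_neighborSet_inl (v : V) :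
    (subdivisionGraph G).neighborSet (.inl v) = .inr '' {e : G.edgeSet | v ∈ (e : Sym2 V)} := by
  ext (w | e)
  · simp [subdivisionGraph]
  · simp [subdivisionGraph]

theorem subdivisionGraph_neighborSet_inr (e : G.edgeSet) :
    (subdivisionGraph G).neighborSet (.inr e) = .inl '' {v | v ∈ (e : Sym2 V)} := by
  ext (w | e)
  · simp [subdivisionGraph]
  · simp [subdivisionGraph]

theorem maxDeg_subdivisionGraph [Finite V] (h : 2 ≤ maxDeg G) :
    maxDeg (subdivisionGraph G) = maxDeg G := by
  have : Nonempty V := nonempty_of_maxDeg_ne_zero G (by omega)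
  obtain ⟨v, hv⟩ := exists_ncard_neighborSet_eq_maxDeg G
  refine IsGreatest.csSup_eq ⟨⟨.inl v, ?_⟩, ?_⟩
  · rw [subdivisionGraph_neighborSet_inl, Set.ncard_image_of_injective _ Sum.inr_injective,
      ncard_setOf_mem_edge, hv]
  · rintro _ ⟨v | e, rfl⟩
    · rw [subdivisionGraph_neighborSet_inl, Set.ncard_image_of_injective _ Sum.inr_injective,
        ncard_setOf_mem_edge]
      exact ncard_neighborSet_le_maxDeg G v
    · rwa [subdivisionGraph_neighborSet_inr, Set.ncard_image_of_injective _ Sum.inl_injective,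
        ncard_setOf_mem_edge_eq_two]

theorem exists_eq_of_mem_edgeSet_subdivisionGraph {E : Sym2 (V ⊕ G.edgeSet)}
    (hE : E ∈ (subdivisionGraph G).edgeSet) :
    ∃ (v : V) (e : G.edgeSet), v ∈ (e : Sym2 V) ∧ E = s(.inl v, .inr e) := by
  induction E using Sym2.ind with
  | _ x y =>
    rcases x with v | e <;> rcases y with w | e'
    · exact hE.elim
    · exact ⟨v, e', hE, rfl⟩
    · exact ⟨w, e, hE, Sym2.eq_swap⟩
    · exact hE.elim

def incidencePairs (G : SimpleGraph V) : Set (V × G.edgeSet) := {p | p.1 ∈ (p.2 : Sym2 V)}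

theorem exists_isProperEdgeColoring_incidencePairs [Finite V] (h : 2 ≤ maxDeg G) :
    ∃ c : V × G.edgeSet → Fin (maxDeg G), IsProperEdgeColoring (incidencePairs G) c := by
  have : NeZero (maxDeg G) := ⟨by omega⟩
  refine exists_isProperEdgeColoring _ (Set.toFinite _) (fun v => ?_) (fun e => ?_) <;>
    rw [Nat.card_fin]
  · exact (ncard_setOf_mem_edge v).trans_le (ncard_neighborSet_le_maxDeg G v)
  · exact (ncard_setOf_mem_edge_eq_two e).trans_le h

/-- The value `0` on pairs of vertices of the same kind is never used: they are not edges. -/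
def subdivisionTotalColoring {k : ℕ} (b : G.edgeSet → Fin k) (c : V × G.edgeSet → Fin k) :
    (V ⊕ G.edgeSet) ⊕ (subdivisionGraph G).edgeSet → Fin (k + 1)
  | .inl (.inl _) => 0
  | .inl (.inr e) => (b e).succ
  | .inr E => Sym2.lift ⟨fun x y => match x, y with
      | .inl v, .inr e | .inr e, .inl v => (c (v, e)).succ
      | _, _ => 0, by rintro (_ | _) (_ | _) <;> rfl⟩ E.1

section SubdivisionTotalColoring

variable {k : ℕ} {b : G.edgeSet → Fin k} {c : V × G.edgeSet → Fin k}

theorem subdivisionTotalColoring_inr_ne_zero (E : (subdivisionGraph G).edgeSet) :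
    subdivisionTotalColoring b c (.inr E) ≠ 0 := by
  obtain ⟨E, hE⟩ := E
  obtain ⟨v, e, -, rfl⟩ := exists_eq_of_mem_edgeSet_subdivisionGraph hE
  exact Fin.succ_ne_zero _

theorem isProperTotalColoring_subdivisionTotalColoring
    (hc : IsProperEdgeColoring (incidencePairs G) c)
    (hb : ∀ e : G.edgeSet, ∀ v ∈ (e : Sym2 V), c (v, e) ≠ b e) :
    IsProperTotalColoring (subdivisionGraph G) (subdivisionTotalColoring b c) := by
  refine ⟨?_, ?_, ?_⟩
  · rintro (v | e) (w | e') h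
    · exact h.elim
    · exact (Fin.succ_ne_zero _).symm
    · exact Fin.succ_ne_zero _
    · exact h.elim
  · rintro ⟨E, hE⟩ ⟨E', hE'⟩ hne ⟨x, hx, hx'⟩
    obtain ⟨v, e, hv, rfl⟩ := exists_eq_of_mem_edgeSet_subdivisionGraph hE
    obtain ⟨v', e', hv', rfl⟩ := exists_eq_of_mem_edgeSet_subdivisionGraph hE'
    refine (Fin.succ_injective _).ne (hc (v, e) hv (v', e') hv' ?_ ?_)
    · rintro ⟨⟩
      exact hne rfl
    · rw [Sym2.mem_iff] at hx hx'
      rcases hx with rfl | rfl <;> rcases hx' with h | h <;> cases h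
      exacts [Or.inl rfl, Or.inr rfl]
  · rintro (v | e) ⟨E, hE⟩ hmem
    · exact (subdivisionTotalColoring_inr_ne_zero _).symm
    · obtain ⟨v, e', hv, rfl⟩ := exists_eq_of_mem_edgeSet_subdivisionGraph hE
      obtain rfl : e = e' := by simpa using hmem
      exact (Fin.succ_injective _).ne (hb e v hv).symm

theorem isAVDTotalColoring_subdivisionTotalColoring
    (hc : IsProperEdgeColoring (incidencePairs G) c)
    (hb : ∀ e : G.edgeSet, ∀ v ∈ (e : Sym2 V), c (v, e) ≠ b e) :
    IsAVDTotalColoring (subdivisionGraph G) (subdivisionTotalColoring b c) := by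
  refine ⟨isProperTotalColoring_subdivisionTotalColoring hc hb, ?_⟩
  -- `0` is in the colour class of every vertex of `G` and of no subdivision vertex.
  have key (v : V) (e : G.edgeSet) : totalColorClass (subdivisionGraph G)
      (subdivisionTotalColoring b c) (.inl v) ≠
      totalColorClass (subdivisionGraph G) (subdivisionTotalColoring b c) (.inr e) := by
    intro heq
    have h0 : (0 : Fin (k + 1)) ∈ totalColorClass (subdivisionGraph G)
        (subdivisionTotalColoring b c) (.inl v) := Set.mem_union_left _ rfl
    rw [heq] at h0
    rcases h0 with h0 | ⟨E, -, h0⟩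
    · exact Fin.succ_ne_zero _ (Set.mem_singleton_iff.mp h0).symm
    · exact subdivisionTotalColoring_inr_ne_zero E h0.symm
  rintro (v | e) (w | e') h
  · exact h.elim
  · exact key v e'
  · exact (key w e).symm
  · exact h.elim

end SubdivisionTotalColoring

end Subdivision

theorem stmt_17_general {V : Type*} [Fintype V] (G : SimpleGraph V) (hdeg : 5 ≤ maxDeg G) :
    avdTotalChromaticNumber (subdivisionGraph G) = maxDeg (subdivisionGraph G) + 1 ∧
    maxDeg (subdivisionGraph G) = maxDeg G := by
  have hS := maxDeg_subdivisionGraph (G := G) (by omega)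
  have : Nonempty V := nonempty_of_maxDeg_ne_zero G (by omega)
  obtain ⟨c, hc⟩ := exists_isProperEdgeColoring_incidencePairs (G := G) (by omega)
  choose b hb using fun e : G.edgeSet => exists_forall_ne_of_ncard_lt (Set.toFinite _)
    (fun v => c (v, e)) (by rw [ncard_setOf_mem_edge_eq_two e, Nat.card_fin]; omega)
  have hf := isAVDTotalColoring_subdivisionTotalColoring hc hb
  exact ⟨avdTotalChromaticNumber_eq_maxDeg_add_one hf (by omega), hS⟩

/-- For a connected graph `G` with `Δ(G) ≥ 5`, the subdivision
graph `S(G)` is AVD-Type 1: `χ''ₐ(S(G)) = Δ(S(G)) + 1 = Δ(G) + 1`. -/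
theorem stmt_17 {V : Type*} [Fintype V] (G : SimpleGraph V)
    (hconn : G.Connected) (hdeg : 5 ≤ maxDeg G) :
    avdTotalChromaticNumber (subdivisionGraph G) = maxDeg (subdivisionGraph G) + 1 ∧
    maxDeg (subdivisionGraph G) = maxDeg G :=
  stmt_17_general G hdeg
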